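/- Let $q \in (0,1]$, $\mu > 0$, $\gamma > 0$ be fixed. With $\mathcal{W}_N = \frac{\log N}{8\log\log N}$ and $\mathcal{T}_N = \frac{16(\log\log N)^2}{\gamma \log N}$, we have $\lim_{N \to \infty} \frac{N (q\mu\mathcal{T}_N)^{\lceil 2\mathcal{W}_N \rceil} e^{-q\mu\mathcal{T}_N}}{4 \cdot \lceil 2\mathcal{W}_N \rceil!} = \infty$. -/

import Mathlib

/-!
With `λ = qμ𝒯_N` and `k = ⌈2𝒲_N⌉`, the bound `k! ≤ k^k` gives `λ^k e^{-λ} / k! ≥ (λ/k)^k e^{-1}`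
once `λ ≤ 1`. Eventually `λ/k ≥ (log N)⁻²` and `k ≤ log N / (4 log log N) + 1`, so
`(λ/k)^k ≥ exp (-(log N)/2 - 2 log log N)` and the quantity is at least `√N / (4e (log N)²)`.
-/

open Real Filter Topology

noncomputable def llog (N : ℕ) : ℝ := Real.log (Real.log N)
noncomputable def Wc (N : ℕ) : ℝ := Real.log N / (8 * llog N)
noncomputable def Tc (γ : ℝ) (N : ℕ) : ℝ := 16 * (llog N) ^ 2 / (γ * Real.log N)
noncomputable def wc (γ : ℝ) (N : ℕ) : ℝ := γ * Wc N / 2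
noncomputable def fc (d γ : ℝ) (N : ℕ) : ℝ :=
  d * (Real.exp ((wc γ N - d) * Tc γ N) - 1) /
    (wc γ N * Real.exp ((wc γ N - d) * Tc γ N) - d)
noncomputable def gc (d γ : ℝ) (N : ℕ) : ℝ :=
  wc γ N * (Real.exp ((wc γ N - d) * Tc γ N) - 1) /
    (wc γ N * Real.exp ((wc γ N - d) * Tc γ N) - d)

theorem exp_neg_mul_sub_one_le_pow_mul_exp_neg_div_factorial {x s K : ℝ} {k : ℕ}
    (hx : x ≤ 1) (hkK : (k : ℝ) ≤ K) (hs : exp (-s) ≤ x / k) :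
    exp (-(K * s) - 1) ≤ x ^ k * exp (-x) / k.factorial := by
  have hxk : 0 < x / k := (exp_pos _).trans_le hs
  have hk : 0 < k := Nat.pos_of_ne_zero (by rintro rfl; simp at hxk)
  have hx0 : 0 < x := by simpa [hk] using hxk
  have hs0 : 0 ≤ s := by
    have := hs.trans (div_le_one_of_le₀ (hx.trans (Nat.one_le_cast.2 hk)) k.cast_nonneg)
    linarith [exp_le_one_iff.1 this]
  have hpow : exp (-(K * s)) ≤ x ^ k / k.factorial :=
    calc exp (-(K * s)) ≤ exp (-s) ^ k := by
          rw [← exp_nat_mul]; gcongr; nlinarith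
      _ ≤ (x / k) ^ k := by gcongr
      _ = x ^ k / (k : ℝ) ^ k := div_pow _ _ _
      _ ≤ x ^ k / k.factorial := by gcongr; exact_mod_cast Nat.factorial_le_pow k
  calc exp (-(K * s) - 1) = exp (-(K * s)) * exp (-1) := by rw [sub_eq_add_neg, exp_add]
    _ ≤ x ^ k / k.factorial * exp (-x) := by gcongr
    _ = x ^ k * exp (-x) / k.factorial := by ring

theorem tendsto_log_natCast_atTop : Tendsto (fun N : ℕ => log N) atTop atTop :=
  tendsto_log_atTop.comp tendsto_natCast_atTop_atTop

theorem tendsto_llog_atTop : Tendsto llog atTop atTop :=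
  tendsto_log_atTop.comp tendsto_log_natCast_atTop

theorem eventually_mul_log_le {c : ℝ} (hc : 0 < c) : ∀ᶠ x in atTop, c * log x ≤ x := by
  filter_upwards [isLittleO_log_id_atTop.bound (inv_pos.2 hc), eventually_ge_atTop 0]
    with x hlog hx
  rw [norm_eq_abs, norm_eq_abs, id, abs_of_nonneg hx] at hlog
  calc c * log x ≤ c * |log x| := by gcongr; exact le_abs_self _
    _ ≤ x := by rw [← le_div_iff₀' hc, div_eq_inv_mul]; exact hlog

theorem tendsto_half_sub_two_mul_log_atTop :
    Tendsto (fun x => x / 2 - 2 * log x) atTop atTop := by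
  refine tendsto_atTop_mono' atTop ?_ (tendsto_id.atTop_div_const (by norm_num : (0 : ℝ) < 4))
  filter_upwards [eventually_mul_log_le (by norm_num : (0 : ℝ) < 8)] with x hx
  simp only [id]
  linarith

theorem tendsto_Tc_nhds_zero (γ : ℝ) : Tendsto (Tc γ) atTop (𝓝 0) := by
  have h := (tendsto_pow_log_div_mul_add_atTop 1 0 2 one_ne_zero).comp tendsto_log_natCast_atTop
  convert h.const_mul (16 / γ) using 1
  · ext N
    simp only [Tc, llog, Function.comp, one_mul, add_zero]
    ring
  · simp

theorem eventually_exp_neg_two_mul_llog_le {q μ γ : ℝ} (hqμ : 0 < q * μ) (hγ : 0 < γ) :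
    ∀ᶠ N : ℕ in atTop, exp (-(2 * llog N)) ≤ q * μ * Tc γ N / ⌈2 * Wc N⌉₊ := by
  filter_upwards [tendsto_llog_atTop.eventually_ge_atTop 1,
    tendsto_log_natCast_atTop.eventually (eventually_mul_log_le (by norm_num : (0 : ℝ) < 4)),
    ((tendsto_pow_atTop three_ne_zero).comp tendsto_llog_atTop).eventually_ge_atTop
      (γ / (32 * (q * μ)))] with N hl h4 hl3
  change 4 * llog N ≤ log N at h4
  change γ / (32 * (q * μ)) ≤ llog N ^ 3 at hl3
  have hL : 0 < log N := by linarith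
  have hexp : exp (-(2 * llog N)) = 1 / log N ^ 2 := by
    rw [exp_neg, mul_comm, exp_mul, llog, exp_log hL]
    norm_num
  have hW : 2 * Wc N = log N / (4 * llog N) := by
    rw [Wc]; field_simp; ring
  have hk : (⌈2 * Wc N⌉₊ : ℝ) ≤ log N / (2 * llog N) :=
    calc (⌈2 * Wc N⌉₊ : ℝ) ≤ 2 * (2 * Wc N) :=
          Nat.ceil_le_two_mul (by rw [hW, le_div_iff₀ (by positivity)]; linarith)
      _ = log N / (2 * llog N) := by rw [hW]; field_simp; ring
  have hk0 : (0 : ℝ) < ⌈2 * Wc N⌉₊ := by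
    rw [Nat.cast_pos, Nat.ceil_pos, hW]; positivity
  have hγl : γ ≤ 32 * (q * μ) * llog N ^ 3 := by rwa [div_le_iff₀ (by positivity), mul_comm] at hl3
  rw [hexp, le_div_iff₀ hk0]
  calc 1 / log N ^ 2 * ⌈2 * Wc N⌉₊ ≤ 1 / log N ^ 2 * (log N / (2 * llog N)) := by gcongr
    _ = γ / (2 * γ * llog N * log N) := by field_simp
    _ ≤ 32 * (q * μ) * llog N ^ 3 / (2 * γ * llog N * log N) := by gcongr
    _ = q * μ * Tc γ N := by rw [Tc]; field_simp; ring

theorem stmt_6 (q μ γ : ℝ) (hq : q ∈ Set.Ioc (0:ℝ) 1) (hμ : 0 < μ) (hγ : 0 < γ) :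
    Tendsto (fun N : ℕ =>
        (N : ℝ) * (q * μ * Tc γ N) ^ (⌈2 * Wc N⌉₊) * Real.exp (-(q * μ * Tc γ N)) /
          (4 * (Nat.factorial ⌈2 * Wc N⌉₊ : ℝ)))
      atTop atTop := by
  have hlower : Tendsto (fun N : ℕ => exp (log N / 2 - 2 * llog N - 1) / 4) atTop atTop :=
    (tendsto_exp_atTop.comp (tendsto_atTop_add_const_right _ (-1)
      (tendsto_half_sub_two_mul_log_atTop.comp tendsto_log_natCast_atTop))).atTop_div_const
      (by norm_num)
  refine tendsto_atTop_mono' atTop ?_ hlower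
  have hrate : Tendsto (fun N => q * μ * Tc γ N) atTop (𝓝 0) := by
    simpa using (tendsto_Tc_nhds_zero γ).const_mul (q * μ)
  filter_upwards [hrate.eventually_le_const one_pos, tendsto_llog_atTop.eventually_ge_atTop 1,
    eventually_exp_neg_two_mul_llog_le (mul_pos hq.1 hμ) hγ] with N hrate_le hl hs
  have hL : 0 < log N := (log_natCast_nonneg N).lt_of_ne fun h => by
    rw [llog, ← h, log_zero] at hl; norm_num at hl
  have hN : (0 : ℝ) < N := Nat.cast_pos.2 (Nat.pos_of_ne_zero (by rintro rfl; simp at hL))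
  have hbound := exp_neg_mul_sub_one_le_pow_mul_exp_neg_div_factorial hrate_le
    (Nat.ceil_lt_add_one (by rw [Wc]; positivity)).le hs
  calc exp (log N / 2 - 2 * llog N - 1) / 4
      = exp (log N) * exp (-((2 * Wc N + 1) * (2 * llog N)) - 1) / 4 := by
        rw [← exp_add, Wc]; congr 2; field_simp; ring
    _ ≤ N * ((q * μ * Tc γ N) ^ ⌈2 * Wc N⌉₊ * exp (-(q * μ * Tc γ N)) /
          (Nat.factorial ⌈2 * Wc N⌉₊)) / 4 := by rw [exp_log hN]; gcongr
    _ = _ := by ring
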